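/- Let A be a graded associative algebra and D a differential operator on A of noncommutative order at most l (i.e., b_{l+1}^D = 0). Then for every n ≥ l+1 and homogeneous a_1,…,a_n ∈ A, D(a_1 a_2 ⋯ a_n) = Σ_{k=1}^{n-l+1} (−1)^{|D|(|a_1|+⋯+|a_{k-1}|)} a_1⋯a_{k-1} D(a_k⋯a_{k+l-1}) a_{k+l}⋯a_n − Σ_{k=2}^{n-l+1} (−1)^{|D|(|a_1|+⋯+|a_{k-1}|)} a_1⋯a_{k-1} D(a_k⋯a_{k+l-2}) a_{k+l-1}⋯a_n. -/

import Mathlib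

/-!
Induction on the length of the list, starting at length `l`, where the formula reads
`D(a₁⋯a_l) = D(a₁⋯a_l)`. For a list `a₁ :: rest` the vanishing of `b_{l+1}^D` at
`(a₁, a₂, …, a_l, a_{l+1}⋯aₙ)` expresses `D(a₁⋯aₙ)` through `D(a₁⋯a_l) a_{l+1}⋯aₙ`,
`± a₁ D(a₂⋯a_l) a_{l+1}⋯aₙ` and `± a₁ D(a₂⋯aₙ)`; the first two are the `k = 1` term of the
first sum and the `k = 2` term of the second, and expanding `D(a₂⋯aₙ)` by induction gives
the remaining terms, shifted by one index.
-/

/-- Product of a nonempty list of elements of a (possibly non-unital) ring,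
junk value `0` on `[]`. -/
def listProd {A : Type*} [NonUnitalRing A] : List A → A
  | [] => 0
  | a :: t => t.foldl (· * ·) a

/-- The Börjeson product `b_n^D(a₁, mid, aₙ)` (with `n = mid.length + 2 ≥ 2`), where
`ε = (−1)^{|a₁||D|}` is the Koszul sign attached to the first argument. -/
def bor {A : Type*} [NonUnitalRing A] (D : A → A) (ε : ℤˣ) (a1 : A) (mid : List A)
    (an : A) : A :=
  D (listProd (a1 :: (mid ++ [an]))) - D (listProd (a1 :: mid)) * an
    - (ε : ℤ) • (a1 * D (listProd (mid ++ [an])))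
    + (ε : ℤ) • (a1 * D (listProd mid) * an)

section ListProd

variable {A : Type*} [NonUnitalRing A]

lemma foldl_mul_eq_mul_listProd {t : List A} (ht : t ≠ []) (a : A) :
    t.foldl (· * ·) a = a * listProd t := by
  induction t generalizing a with
  | nil => contradiction
  | cons b t ih =>
    rcases eq_or_ne t [] with rfl | ht'
    · rfl
    · rw [List.foldl_cons, ih ht', listProd, ih ht', mul_assoc]

lemma listProd_cons (a : A) {t : List A} (ht : t ≠ []) :
    listProd (a :: t) = a * listProd t :=
  foldl_mul_eq_mul_listProd ht a

lemma listProd_append {xs ys : List A} (hx : xs ≠ []) (hy : ys ≠ []) :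
    listProd (xs ++ ys) = listProd xs * listProd ys := by
  obtain ⟨x, xs, rfl⟩ := List.exists_cons_of_ne_nil hx
  rw [List.cons_append, listProd, List.foldl_append, foldl_mul_eq_mul_listProd hy]
  rfl

lemma listProd_append_singleton_listProd (xs : List A) {ys : List A} (hy : ys ≠ []) :
    listProd (xs ++ [listProd ys]) = listProd (xs ++ ys) := by
  rcases eq_or_ne xs [] with rfl | hx
  · rfl
  · rw [listProd_append hx (List.cons_ne_nil _ _), listProd_append hx hy]
    rfl

lemma listProd_mem {p : A → Prop} (hmul : ∀ a b : A, p a → p b → p (a * b)) {t : List A}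
    (ht : t ≠ []) (h : ∀ x ∈ t, p x) : p (listProd t) := by
  induction t with
  | nil => contradiction
  | cons a t ih =>
    rcases eq_or_ne t [] with rfl | ht'
    · exact h a List.mem_cons_self
    · rw [listProd_cons a ht']
      exact hmul _ _ (h a List.mem_cons_self)
        (ih ht' fun x hx => h x (List.mem_cons_of_mem a hx))

end ListProd

section Expansion

variable {A : Type*} [NonUnitalRing A] (D : A → A) (ε : A → ℤˣ)

/-- `±a₁⋯a_k D(a_{k+1}⋯a_{k+p}) a_{k+p+1}⋯aₙ`, with the Koszul sign `ε a₁ ⋯ ε a_k`. -/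
def koszulApply (as : List A) (k p : ℕ) : A :=
  (((as.take k).map ε).prod : ℤ) • listProd (as.take k ++ D (listProd ((as.drop k).take p)) ::
    as.drop (k + p))

/-- The right-hand side of the expansion of `D(a₁⋯aₙ)` for an operator of order `l`,
indexed from `0` rather than from `1` as in the paper. -/
def expansion (as : List A) (l : ℕ) : A :=
  ∑ k ∈ Finset.range (as.length - l + 1), koszulApply D ε as k l
    - ∑ k ∈ Finset.range (as.length - l), koszulApply D ε as (k + 1) (l - 1)

variable {D ε}

lemma koszulApply_zero {as : List A} {p : ℕ} (h : p < as.length) :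
    koszulApply D ε as 0 p = D (listProd (as.take p)) * listProd (as.drop p) := by
  have hdrop : as.drop p ≠ [] := by simpa using h
  simp only [koszulApply, List.take_zero, List.map_nil, List.prod_nil, Units.val_one, one_smul,
    List.nil_append, List.drop_zero, zero_add]
  exact listProd_cons _ hdrop

lemma koszulApply_zero_length (as : List A) :
    koszulApply D ε as 0 as.length = D (listProd as) := by
  simp [koszulApply, listProd]

lemma koszulApply_cons_succ (a : A) (as : List A) (k p : ℕ) :
    koszulApply D ε (a :: as) (k + 1) p = (ε a : ℤ) • (a * koszulApply D ε as k p) := by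
  rw [koszulApply, koszulApply, List.take_succ_cons, Nat.add_right_comm, List.drop_succ_cons,
    List.drop_succ_cons, List.map_cons, List.prod_cons, Units.val_mul, mul_smul, mul_smul_comm,
    List.cons_append, listProd_cons a (by simp)]

lemma expansion_cons {a : A} {rest : List A} {l : ℕ} (h : l ≤ rest.length) :
    expansion D ε (a :: rest) l = koszulApply D ε (a :: rest) 0 l
      - koszulApply D ε (a :: rest) 1 (l - 1) + (ε a : ℤ) • (a * expansion D ε rest l) := by
  have hlen : (a :: rest).length - l = rest.length - l + 1 := by simp; omega
  rw [expansion, expansion, hlen, Finset.sum_range_succ', Finset.sum_range_succ'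
    (fun k => koszulApply D ε (a :: rest) (k + 1) (l - 1))]
  simp only [koszulApply_cons_succ, ← Finset.mul_sum, ← Finset.smul_sum, mul_sub, smul_sub]
  abel

lemma map_listProd_cons_of_bor_eq_zero {a : A} {rest : List A} {m : ℕ} (hm : m < rest.length)
    (h : bor D (ε a) a (rest.take m) (listProd (rest.drop m)) = 0) :
    D (listProd (a :: rest)) = koszulApply D ε (a :: rest) 0 (m + 1)
      - koszulApply D ε (a :: rest) 1 m + (ε a : ℤ) • (a * D (listProd rest)) := by
  have hdrop : rest.drop m ≠ [] := by simpa using hm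
  rw [koszulApply_zero (by simpa using hm), koszulApply_cons_succ, koszulApply_zero hm,
    List.take_succ_cons, List.drop_succ_cons, ← mul_assoc]
  rw [bor, ← List.cons_append, listProd_append_singleton_listProd _ hdrop,
    listProd_append_singleton_listProd _ hdrop, List.cons_append, List.take_append_drop] at h
  rw [← sub_eq_zero, ← h]
  abel

theorem map_listProd_eq_expansion {p : A → Prop} (hmul : ∀ a b : A, p a → p b → p (a * b))
    {l : ℕ} (hl : 1 ≤ l)
    (hord : ∀ (a1 : A) (mid : List A) (an : A), mid.length = l - 1 →
      p a1 → (∀ x ∈ mid, p x) → p an → bor D (ε a1) a1 mid an = 0)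
    {as : List A} (hlen : l ≤ as.length) (hp : ∀ x ∈ as, p x) :
    D (listProd as) = expansion D ε as l := by
  obtain ⟨m, rfl⟩ : ∃ m, l = m + 1 := ⟨l - 1, by omega⟩
  induction as with
  | nil => simp at hlen
  | cons a rest ih =>
    have hrest : ∀ x ∈ rest, p x := fun x hx => hp x (List.mem_cons_of_mem a hx)
    rcases Nat.lt_or_ge rest.length (m + 1) with hshort | hlong
    · have hfull : m + 1 = (a :: rest).length := by simp at hlen ⊢; omega
      simp only [expansion, ← hfull, Nat.sub_self, zero_add, Finset.sum_range_one,
        Finset.range_zero, Finset.sum_empty, sub_zero]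
      rw [hfull, koszulApply_zero_length]
    have hm : m < rest.length := hlong
    have hbor := hord a (rest.take m) (listProd (rest.drop m)) (by simp; omega)
      (hp a List.mem_cons_self) (fun x hx => hrest x (List.mem_of_mem_take hx))
      (listProd_mem hmul (by simpa using hm) fun x hx => hrest x (List.mem_of_mem_drop hx))
    rw [map_listProd_cons_of_bor_eq_zero hm hbor, ih hrest hlong, expansion_cons hlong]
    rfl

lemma expansion_eq_sum_Icc (as : List A) (l : ℕ) :
    expansion D ε as l =
      ∑ k ∈ Finset.Icc 1 (as.length - l + 1), koszulApply D ε as (k - 1) l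
        - ∑ k ∈ Finset.Icc 2 (as.length - l + 1), koszulApply D ε as (k - 1) (l - 1) := by
  simp only [expansion, ← Finset.Ico_add_one_right_eq_Icc, Finset.sum_Ico_eq_sum_range,
    Nat.add_sub_cancel, Nat.add_sub_cancel_left, show ∀ k, 2 + k - 1 = k + 1 by omega,
    show as.length - l + 1 + 1 - 2 = as.length - l by omega]

end Expansion

theorem stmt10_general {A : Type*} [NonUnitalRing A] (D : A →+ A) (deg : A → ℤ) (dD : ℤ)
    (homog : A → Prop)
    (hmul : ∀ a b : A, homog a → homog b → homog (a * b))
    (l : ℕ) (hl : 1 ≤ l)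
    (hord : ∀ (a1 : A) (mid : List A) (an : A), mid.length = l - 1 →
      homog a1 → (∀ x ∈ mid, homog x) → homog an →
      bor (⇑D) ((-1 : ℤˣ) ^ (dD * deg a1)) a1 mid an = 0)
    (n : ℕ) (hn : l + 1 ≤ n) (as : List A) (hlen : as.length = n)
    (hhom : ∀ x ∈ as, homog x) :
    D (listProd as) =
      (∑ k ∈ Finset.Icc 1 (n - l + 1),
        ((((as.take (k - 1)).map fun a => (-1 : ℤˣ) ^ (dD * deg a)).prod : ℤˣ) : ℤ) •
          listProd (as.take (k - 1) ++
            D (listProd ((as.drop (k - 1)).take l)) :: as.drop (k - 1 + l)))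
      - ∑ k ∈ Finset.Icc 2 (n - l + 1),
        ((((as.take (k - 1)).map fun a => (-1 : ℤˣ) ^ (dD * deg a)).prod : ℤˣ) : ℤ) •
          listProd (as.take (k - 1) ++
            D (listProd ((as.drop (k - 1)).take (l - 1))) :: as.drop (k - 1 + (l - 1))) := by
  subst hlen
  exact (map_listProd_eq_expansion hmul hl hord (by omega) hhom).trans
    (expansion_eq_sum_Icc as l)

/-- If `D` is a differential operator of noncommutative order at most `l` on a graded
associative algebra `A` (i.e. `b_{l+1}^D = 0`), then for every `n ≥ l+1` and homogeneous
`a₁,…,aₙ`: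
`D(a₁⋯aₙ) = Σ_{k=1}^{n-l+1} (−1)^{|D|(|a₁|+⋯+|a_{k-1}|)} a₁⋯a_{k-1} D(a_k⋯a_{k+l-1}) a_{k+l}⋯aₙ
 − Σ_{k=2}^{n-l+1} (−1)^{|D|(|a₁|+⋯+|a_{k-1}|)} a₁⋯a_{k-1} D(a_k⋯a_{k+l-2}) a_{k+l-1}⋯aₙ`. -/
theorem stmt10 {A : Type*} [NonUnitalRing A] (D : A →+ A) (deg : A → ℤ) (dD : ℤ)
    (homog : A → Prop)
    (hmul : ∀ a b : A, homog a → homog b → homog (a * b))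
    (hdeg : ∀ a b : A, homog a → homog b → deg (a * b) = deg a + deg b)
    (l : ℕ) (hl : 1 ≤ l)
    (hord : ∀ (a1 : A) (mid : List A) (an : A), mid.length = l - 1 →
      homog a1 → (∀ x ∈ mid, homog x) → homog an →
      bor (⇑D) ((-1 : ℤˣ) ^ (dD * deg a1)) a1 mid an = 0)
    (n : ℕ) (hn : l + 1 ≤ n) (as : List A) (hlen : as.length = n)
    (hhom : ∀ x ∈ as, homog x) :
    D (listProd as) =
      (∑ k ∈ Finset.Icc 1 (n - l + 1),
        ((((as.take (k - 1)).map fun a => (-1 : ℤˣ) ^ (dD * deg a)).prod : ℤˣ) : ℤ) •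
          listProd (as.take (k - 1) ++
            D (listProd ((as.drop (k - 1)).take l)) :: as.drop (k - 1 + l)))
      - ∑ k ∈ Finset.Icc 2 (n - l + 1),
        ((((as.take (k - 1)).map fun a => (-1 : ℤˣ) ^ (dD * deg a)).prod : ℤˣ) : ℤ) •
          listProd (as.take (k - 1) ++
            D (listProd ((as.drop (k - 1)).take (l - 1))) :: as.drop (k - 1 + (l - 1))) :=
  stmt10_general D deg dD homog hmul l hl hord n hn as hlen hhom
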